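/- Let M be a hypermodular rank-4 matroid, l₁, l₂ disjoint coplanar lines, and M' a single-element extension of M (adding point p) in which cl_{M'}(l₁) and cl_{M'}(l₂) intersect. Then for every line l of M' containing p, the restriction l ∩ E(M) is a line of M. -/

import Mathlib

/-!
The flats of `M` whose closure in `M'` contains `p` form a modular cut of `M`, and `p` is the
common point of `cl'(l₁)` and `cl'(l₂)`, so `l₁` and `l₂` belong to it. In a hypermodular matroid
of rank 4 two distinct planes are hyperplanes, hence a modular pair meeting in a line; this puts a
line of the modular cut through every point of `M`. For a line `l` of `M'` through `p`, such a
line through a point of `l ∩ E(M)` shows that `l ∩ E(M)` spans `p`, so it has the rank 2 of `l`.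
-/

open Set

namespace StickyKantor

variable {α : Type*}

/-- The rank of a set in a matroid, as an integer (junk value `0` when infinite). -/
noncomputable def rk (M : Matroid α) (X : Set α) : ℤ :=
  ((⨆ I ∈ {I : Set α | M.Indep I ∧ I ⊆ X}, I.encard).toNat : ℤ)

/-- The modular defect of a pair of sets. -/
noncomputable def mdefect (M : Matroid α) (X Y : Set α) : ℤ :=
  rk M X + rk M Y - rk M (X ∪ Y) - rk M (X ∩ Y)

/-- A modular pair of sets. -/
def ModularPair (M : Matroid α) (X Y : Set α) : Prop :=
  rk M X + rk M Y = rk M (X ∪ Y) + rk M (X ∩ Y)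

/-- `M'` is an extension of `M`: it has a larger ground set and restricts to `M`. -/
def IsExtension (M' M : Matroid α) : Prop :=
  M.E ⊆ M'.E ∧ M = M'.restrict M.E

/-- A point: a rank-1 flat. -/
def IsPoint (M : Matroid α) (p : Set α) : Prop := M.IsFlat p ∧ rk M p = 1

/-- A line: a rank-2 flat. -/
def IsLine (M : Matroid α) (l : Set α) : Prop := M.IsFlat l ∧ rk M l = 2

/-- A plane: a rank-3 flat. -/
def IsPlane (M : Matroid α) (e : Set α) : Prop := M.IsFlat e ∧ rk M e = 3

/-- Two lines are coplanar if their join has rank at most 3. -/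
def Coplanar (M : Matroid α) (l₁ l₂ : Set α) : Prop := rk M (l₁ ∪ l₂) ≤ 3

/-- A hyperplane: a maximal proper flat. -/
def IsHyperplane (M : Matroid α) (H : Set α) : Prop :=
  M.IsFlat H ∧ H ≠ M.E ∧ ∀ F, M.IsFlat F → H ⊂ F → F = M.E

/-- A matroid is hypermodular if every pair of hyperplanes is a modular pair. -/
def Hypermodular (M : Matroid α) : Prop :=
  ∀ H₁ H₂, IsHyperplane M H₁ → IsHyperplane M H₂ → ModularPair M H₁ H₂

/-- A matroid is modular if every pair of flats is a modular pair. -/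
def Modular (M : Matroid α) : Prop :=
  ∀ F₁ F₂, M.IsFlat F₁ → M.IsFlat F₂ → ModularPair M F₁ F₂

/-- A modular cut: an up-closed family of flats closed under intersections of
modular pairs. -/
def IsModularCut (M : Matroid α) (𝓜 : Set (Set α)) : Prop :=
  (∀ F ∈ 𝓜, M.IsFlat F) ∧
  (∀ F ∈ 𝓜, ∀ F', M.IsFlat F' → F ⊆ F' → F' ∈ 𝓜) ∧
  (∀ F₁ ∈ 𝓜, ∀ F₂ ∈ 𝓜, ModularPair M F₁ F₂ → F₁ ∩ F₂ ∈ 𝓜)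

/-- The principal modular cut of a flat `F`. -/
def principalCut (M : Matroid α) (F : Set α) : Set (Set α) :=
  {G | M.IsFlat G ∧ F ⊆ G}

/-- The modular cut generated by a family of flats. -/
def genCut (M : Matroid α) (A : Set (Set α)) : Set (Set α) :=
  ⋂₀ {𝓜 | IsModularCut M 𝓜 ∧ A ⊆ 𝓜}

/-- A non-modular pair of flats is intersectable if the modular cut it generates is
not the principal modular cut of its intersection. -/
def Intersectable (M : Matroid α) (X Y : Set α) : Prop :=
  genCut M {X, Y} ≠ principalCut M (X ∩ Y)

/-- A matroid is OTE (only trivially extendable) if every nonempty modular cut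
is principal. -/
def OTE (M : Matroid α) : Prop :=
  ∀ 𝓜, IsModularCut M 𝓜 → 𝓜 ≠ ∅ → ∃ F, M.IsFlat F ∧ 𝓜 = principalCut M F

/-- A matroid is sticky if every pair of extensions meeting exactly in its ground set
has an amalgam. -/
def Sticky (M : Matroid α) : Prop :=
  ∀ N₁ N₂ : Matroid α, IsExtension N₁ M → IsExtension N₂ M → N₁.E ∩ N₂.E = M.E →
    ∃ A : Matroid α, A.E = N₁.E ∪ N₂.E ∧ IsExtension A N₁ ∧ IsExtension A N₂

/-- The function `η` of the amalgam construction. -/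
noncomputable def eta (M M₁ M₂ : Matroid α) (X : Set α) : ℤ :=
  rk M₁ (X ∩ M₁.E) + rk M₂ (X ∩ M₂.E) - rk M (X ∩ M.E)

/-- The function `ξ` of the amalgam construction. -/
noncomputable def xi (M M₁ M₂ : Matroid α) (X : Set α) : ℤ :=
  sInf {n : ℤ | ∃ Y, X ⊆ Y ∧ Y ⊆ M₁.E ∪ M₂.E ∧ n = eta M M₁ M₂ Y}

/-- The lattice `𝓛(M₁,M₂)` of sets whose traces on both ground sets are flats. -/
def latticeL (M₁ M₂ : Matroid α) : Set (Set α) :=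
  {X | X ⊆ M₁.E ∪ M₂.E ∧ M₁.IsFlat (X ∩ M₁.E) ∧ M₂.IsFlat (X ∩ M₂.E)}

theorem _root_.Matroid.IsFlat.inter {M : Matroid α} {F G : Set α} (hF : M.IsFlat F)
    (hG : M.IsFlat G) : M.IsFlat (F ∩ G) := by
  rw [Matroid.isFlat_iff_closure_eq]
  refine (subset_inter ?_ ?_).antisymm
    (M.subset_closure _ (inter_subset_left.trans hF.subset_ground))
  · exact (M.closure_subset_closure inter_subset_left).trans hF.closure.subset
  · exact (M.closure_subset_closure inter_subset_right).trans hG.closure.subset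

section Rank

variable {M : Matroid α} {X Y : Set α} {e : α}

theorem rk_eq_toNat_eRk (M : Matroid α) (X : Set α) : rk M X = (M.eRk X).toNat := by
  refine congrArg (fun n : ENat ↦ (n.toNat : ℤ)) (le_antisymm ?_ ?_)
  · exact iSup₂_le fun I hI ↦ hI.1.encard_le_eRk_of_subset hI.2
  · obtain ⟨I, hI⟩ := M.exists_isBasis' X
    rw [hI.eRk_eq_encard]
    exact le_iSup₂ (f := fun I (_ : I ∈ {I | M.Indep I ∧ I ⊆ X}) ↦ I.encard) I
      ⟨hI.indep, hI.subset⟩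

theorem rk_restrict (M : Matroid α) {R : Set α} (hX : X ⊆ R) :
    rk (M.restrict R) X = rk M X := by
  rw [rk_eq_toNat_eRk, rk_eq_toNat_eRk, M.restrict_eRk_eq hX]

theorem rk_empty (M : Matroid α) : rk M ∅ = 0 := by
  rw [rk_eq_toNat_eRk, M.eRk_empty, ENat.toNat_zero, Nat.cast_zero]

theorem rk_closure (M : Matroid α) (X : Set α) : rk M (M.closure X) = rk M X := by
  rw [rk_eq_toNat_eRk, rk_eq_toNat_eRk, M.eRk_closure_eq]

theorem rk_insert_of_mem_closure (he : e ∈ M.closure X) : rk M (insert e X) = rk M X := by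
  rw [← rk_closure, Matroid.closure_insert_eq_of_mem_closure he, rk_closure]

theorem eRk_ne_top (M : Matroid α) [M.RankFinite] (X : Set α) : M.eRk X ≠ ⊤ :=
  Matroid.eRk_ne_top_iff.2 (M.isRkFinite_set X)

theorem exists_eRk_eq_rk (M : Matroid α) [M.RankFinite] (X : Set α) :
    ∃ n : ℕ, M.eRk X = n ∧ rk M X = n := by
  obtain ⟨n, hn⟩ := ENat.ne_top_iff_exists.1 (eRk_ne_top M X)
  exact ⟨n, hn.symm, by rw [rk_eq_toNat_eRk, ← hn, ENat.toNat_natCast]⟩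

theorem rk_inter_add_rk_union_le (M : Matroid α) [M.RankFinite] (X Y : Set α) :
    rk M (X ∩ Y) + rk M (X ∪ Y) ≤ rk M X + rk M Y := by
  have h := M.eRk_inter_add_eRk_union_le X Y
  obtain ⟨a, haX, ha⟩ := exists_eRk_eq_rk M X
  obtain ⟨b, hbY, hb⟩ := exists_eRk_eq_rk M Y
  obtain ⟨c, hc', hc⟩ := exists_eRk_eq_rk M (X ∩ Y)
  obtain ⟨d, hd', hd⟩ := exists_eRk_eq_rk M (X ∪ Y)
  rw [haX, hbY, hc', hd'] at h
  rw [ha, hb, hc, hd]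
  exact_mod_cast h

variable [M.RankFinite]

theorem rk_le_rk_iff : rk M X ≤ rk M Y ↔ M.eRk X ≤ M.eRk Y := by
  obtain ⟨a, haX, ha⟩ := exists_eRk_eq_rk M X
  obtain ⟨b, hbY, hb⟩ := exists_eRk_eq_rk M Y
  rw [ha, hb, haX, hbY, Nat.cast_le, Nat.cast_le]

theorem rk_mono (h : X ⊆ Y) : rk M X ≤ rk M Y :=
  rk_le_rk_iff.2 (M.eRk_mono h)

theorem rk_insert_of_notMem_closure (he : e ∈ M.E) (heX : e ∉ M.closure X) :
    rk M (insert e X) = rk M X + 1 := by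
  rw [rk_eq_toNat_eRk, rk_eq_toNat_eRk, Matroid.eRk_insert_eq_add_one ⟨he, heX⟩,
    ENat.toNat_add (eRk_ne_top M X) ENat.one_ne_top, ENat.toNat_one, Nat.cast_add, Nat.cast_one]

theorem closure_eq_closure_of_subset_of_rk_le (hXY : X ⊆ Y) (h : rk M Y ≤ rk M X) :
    M.closure X = M.closure Y :=
  (M.isRkFinite_set X).closure_eq_closure_of_subset_of_eRk_ge_eRk hXY (rk_le_rk_iff.1 h)

theorem _root_.Matroid.IsFlat.eq_of_subset_of_rk_le {F : Set α} (hF : M.IsFlat F)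
    (hFX : F ⊆ X) (hX : X ⊆ M.E) (h : rk M X ≤ rk M F) : F = X := by
  refine hFX.antisymm ?_
  rw [← hF.closure, closure_eq_closure_of_subset_of_rk_le hFX h]
  exact M.subset_closure X hX

theorem _root_.Matroid.IsFlat.rk_insert {F : Set α} (hF : M.IsFlat F) (he : e ∈ M.E)
    (heF : e ∉ F) : rk M (insert e F) = rk M F + 1 :=
  rk_insert_of_notMem_closure he (by rwa [hF.closure])

theorem rk_add_one_le_rk_union {F G : Set α} (hF : M.IsFlat F) (hG : M.IsFlat G) (hne : F ≠ G)
    (h : rk M F ≤ rk M G) : rk M F + 1 ≤ rk M (F ∪ G) := by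
  obtain ⟨x, hxG, hxF⟩ : ∃ x ∈ G, x ∉ F :=
    not_subset.1 fun hGF ↦ hne (hG.eq_of_subset_of_rk_le hGF hF.subset_ground h).symm
  rw [← hF.rk_insert (hG.subset_ground hxG) hxF]
  exact rk_mono (insert_subset (mem_union_right F hxG) subset_union_left)

theorem mem_closure_inter_of_modularPair (hXY : ModularPair M X Y) (hX : e ∈ M.closure X)
    (hY : e ∈ M.closure Y) : e ∈ M.closure (X ∩ Y) := by
  have hsub := rk_inter_add_rk_union_le M (insert e X) (insert e Y)
  rw [← insert_inter_distrib, ← insert_union_distrib, rk_insert_of_mem_closure hX,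
    rk_insert_of_mem_closure hY] at hsub
  have hunion := rk_mono (M := M) (subset_insert e (X ∪ Y))
  by_contra he
  rw [rk_insert_of_notMem_closure (M.closure_subset_ground X hX) he] at hsub
  unfold ModularPair at hXY
  linarith

end Rank

theorem IsLine.nonempty {M : Matroid α} {l : Set α} (h : IsLine M l) : l.Nonempty := by
  rw [nonempty_iff_ne_empty]
  rintro rfl
  simpa [rk_empty] using h.2

theorem IsModularCut.closure_mem {M : Matroid α} {𝓜 : Set (Set α)} (h𝓜 : IsModularCut M 𝓜)
    {F X : Set α} (hF : F ∈ 𝓜) (hFX : F ⊆ X) (hX : X ⊆ M.E) : M.closure X ∈ 𝓜 :=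
  h𝓜.2.1 F hF _ (Matroid.isFlat_closure X) (hFX.trans (M.subset_closure X hX))

section Hypermodular

variable {M : Matroid α} [M.RankFinite] {H₁ H₂ : Set α}

theorem isHyperplane_of_rk_add_one (hH : M.IsFlat H₁) (h : rk M H₁ + 1 = rk M M.E) :
    IsHyperplane M H₁ := by
  refine ⟨hH, fun hE ↦ by rw [hE] at h; linarith, fun F hF hHF ↦ ?_⟩
  obtain ⟨x, hxF, hxH⟩ := exists_of_ssubset hHF
  have hle := rk_mono (M := M) (insert_subset hxF hHF.subset)
  rw [hH.rk_insert (hF.subset_ground hxF) hxH, h] at hle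
  exact hF.eq_of_subset_of_rk_le hF.subset_ground Subset.rfl hle

theorem Hypermodular.rk_inter_add_two (hM : Hypermodular M) (hH₁ : M.IsFlat H₁)
    (hH₂ : M.IsFlat H₂) (h₁ : rk M H₁ + 1 = rk M M.E) (h₂ : rk M H₂ + 1 = rk M M.E)
    (hne : H₁ ≠ H₂) : rk M (H₁ ∩ H₂) + 2 = rk M M.E := by
  have hmod := hM H₁ H₂ (isHyperplane_of_rk_add_one hH₁ h₁) (isHyperplane_of_rk_add_one hH₂ h₂)
  have hunion := rk_add_one_le_rk_union hH₁ hH₂ hne (by linarith)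
  have hground := rk_mono (M := M) (union_subset hH₁.subset_ground hH₂.subset_ground)
  unfold ModularPair at hmod
  linarith

end Hypermodular

section RankFour

variable {M : Matroid α} [M.RankFinite] {𝓜 : Set (Set α)} {l₁ l₂ L : Set α} {q : α}

theorem isPlane_closure_insert (hL : IsLine M L) (hq : q ∈ M.E) (hqL : q ∉ L) :
    IsPlane M (M.closure (insert q L)) := by
  refine ⟨Matroid.isFlat_closure _, ?_⟩
  rw [rk_closure, hL.1.rk_insert hq hqL, hL.2]
  norm_num

theorem isPlane_closure_union (h₁ : IsLine M l₁) (h₂ : IsLine M l₂) (hne : l₁ ≠ l₂)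
    (hcop : Coplanar M l₁ l₂) : IsPlane M (M.closure (l₁ ∪ l₂)) := by
  refine ⟨Matroid.isFlat_closure _, ?_⟩
  have := rk_add_one_le_rk_union h₁.1 h₂.1 hne (by rw [h₁.2, h₂.2])
  rw [rk_closure]
  unfold Coplanar at hcop
  linarith [h₁.2]

theorem IsModularCut.exists_isLine_mem_of_isPlane (hM : Hypermodular M) (hr : rk M M.E = 4)
    (h𝓜 : IsModularCut M 𝓜) {A B : Set α} (hA : IsPlane M A) (hB : IsPlane M B) (hAB : A ≠ B)
    (hA𝓜 : A ∈ 𝓜) (hB𝓜 : B ∈ 𝓜) (hqA : q ∈ A) (hqB : q ∈ B) :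
    ∃ L, IsLine M L ∧ q ∈ L ∧ L ∈ 𝓜 := by
  have h₁ : rk M A + 1 = rk M M.E := by rw [hA.2, hr]; norm_num
  have h₂ : rk M B + 1 = rk M M.E := by rw [hB.2, hr]; norm_num
  have hrk := hM.rk_inter_add_two hA.1 hB.1 h₁ h₂ hAB
  refine ⟨A ∩ B, ⟨hA.1.inter hB.1, by linarith⟩, ⟨hqA, hqB⟩, h𝓜.2.2 A hA𝓜 B hB𝓜 ?_⟩
  exact hM A B (isHyperplane_of_rk_add_one hA.1 h₁) (isHyperplane_of_rk_add_one hB.1 h₂)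

/-- With `P` the plane spanned by `l₁` and `l₂`: a point `e` off `P` is the meet of the
two planes through `e` and `lᵢ`; a point `q` of `P` is the meet of `P` with the plane spanned
by `q` and such a line through some `e ∉ P`. -/
theorem IsModularCut.exists_isLine_mem (hM : Hypermodular M) (hr : rk M M.E = 4)
    (h𝓜 : IsModularCut M 𝓜) (h₁ : IsLine M l₁) (h₂ : IsLine M l₂) (hne : l₁ ≠ l₂)
    (hcop : Coplanar M l₁ l₂) (h₁𝓜 : l₁ ∈ 𝓜) (h₂𝓜 : l₂ ∈ 𝓜) (hq : q ∈ M.E) :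
    ∃ L, IsLine M L ∧ q ∈ L ∧ L ∈ 𝓜 := by
  have hl₁E := h₁.1.subset_ground
  have hl₂E := h₂.1.subset_ground
  set P := M.closure (l₁ ∪ l₂)
  have hP : IsPlane M P := isPlane_closure_union h₁ h₂ hne hcop
  have hP𝓜 : P ∈ 𝓜 := h𝓜.closure_mem h₁𝓜 subset_union_left (union_subset hl₁E hl₂E)
  have hl₁P : l₁ ⊆ P := M.subset_closure_of_subset' subset_union_left
  have hl₂P : l₂ ⊆ P := M.subset_closure_of_subset' subset_union_right
  have off_plane : ∀ e ∈ M.E, e ∉ P → ∃ L, IsLine M L ∧ e ∈ L ∧ L ∈ 𝓜 := by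
    intro e he heP
    have hplane₁ := isPlane_closure_insert h₁ he (heP <| hl₁P ·)
    have hplane₂ := isPlane_closure_insert h₂ he (heP <| hl₂P ·)
    refine h𝓜.exists_isLine_mem_of_isPlane hM hr hplane₁ hplane₂ (fun hsame ↦ heP ?_)
      (h𝓜.closure_mem h₁𝓜 (subset_insert e l₁) (insert_subset he hl₁E))
      (h𝓜.closure_mem h₂𝓜 (subset_insert e l₂) (insert_subset he hl₂E))
      (M.mem_closure_of_mem' (mem_insert e l₁)) (M.mem_closure_of_mem' (mem_insert e l₂))
    have hPsub : P ⊆ M.closure (insert e l₁) := by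
      rw [← hplane₁.1.closure]
      refine M.closure_subset_closure (union_subset
        (M.subset_closure_of_subset' (subset_insert e l₁)) ?_)
      rw [hsame]
      exact M.subset_closure_of_subset' (subset_insert e l₂)
    rw [hP.1.eq_of_subset_of_rk_le hPsub hplane₁.1.subset_ground (by rw [hplane₁.2, hP.2])]
    exact M.mem_closure_of_mem' (mem_insert e l₁)
  by_cases hqP : q ∈ P
  case neg => exact off_plane q hq hqP
  obtain ⟨e, he, heP⟩ : ∃ e ∈ M.E, e ∉ P := by
    by_contra! hEP
    have := rk_mono (M := M) hEP
    rw [hP.2, hr] at this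
    norm_num at this
  obtain ⟨L, hL, heL, hL𝓜⟩ := off_plane e he heP
  by_cases hqL : q ∈ L
  · exact ⟨L, hL, hqL, hL𝓜⟩
  have hLE := hL.1.subset_ground
  refine h𝓜.exists_isLine_mem_of_isPlane hM hr (isPlane_closure_insert hL hq hqL) hP
    (fun h ↦ heP ?_) (h𝓜.closure_mem hL𝓜 (subset_insert q L) (insert_subset hq hLE)) hP𝓜
    (M.mem_closure_of_mem' (mem_insert q L)) hqP
  rw [← h]
  exact M.subset_closure_of_subset' (subset_insert q L) hLE heL

end RankFour

section Extension

variable {M M' : Matroid α} {X : Set α} {p : α}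

theorem IsExtension.rk_eq (hext : IsExtension M' M) (hX : X ⊆ M.E) : rk M X = rk M' X := by
  conv_lhs => rw [hext.2]
  exact rk_restrict M' hX

theorem IsExtension.closure_eq (hext : IsExtension M' M) (hX : X ⊆ M.E) :
    M.closure X = M'.closure X ∩ M.E := by
  conv_lhs => rw [hext.2]
  exact M'.restrict_closure_eq hX hext.1

theorem IsExtension.isFlat_inter_ground (hext : IsExtension M' M) {F : Set α}
    (hF : M'.IsFlat F) : M.IsFlat (F ∩ M.E) := by
  rw [Matroid.isFlat_iff_closure_eq, hext.closure_eq inter_subset_right]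
  refine (inter_subset_inter_left _ ?_).antisymm (subset_inter ?_ inter_subset_right)
  · exact (M'.closure_subset_closure inter_subset_left).trans hF.closure.subset
  · exact M'.subset_closure _ (inter_subset_right.trans hext.1)

theorem IsExtension.eq_of_mem_closure_inter (hext : IsExtension M' M)
    (hE : M'.E = insert p M.E) {F₁ F₂ : Set α} (hF₁ : M.IsFlat F₁) (hF₂ : M.IsFlat F₂)
    (hdisj : F₁ ∩ F₂ = ∅) {x : α} (hx : x ∈ M'.closure F₁ ∩ M'.closure F₂) : x = p := by
  have hxE : x ∈ insert p M.E := hE ▸ M'.closure_subset_ground F₁ hx.1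
  refine hxE.resolve_right fun hxM ↦ ?_
  have hx₁ : x ∈ M.closure F₁ := (hext.closure_eq hF₁.subset_ground).symm ▸ ⟨hx.1, hxM⟩
  have hx₂ : x ∈ M.closure F₂ := (hext.closure_eq hF₂.subset_ground).symm ▸ ⟨hx.2, hxM⟩
  rw [hF₁.closure] at hx₁
  rw [hF₂.closure] at hx₂
  exact (hdisj ▸ ⟨hx₁, hx₂⟩ : x ∈ (∅ : Set α))

theorem IsExtension.isModularCut [M'.RankFinite] (hext : IsExtension M' M) (p : α) :
    IsModularCut M {F | M.IsFlat F ∧ p ∈ M'.closure F} := by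
  refine ⟨fun F hF ↦ hF.1, fun F hF F' hF' hFF' ↦ ⟨hF', M'.closure_subset_closure hFF' hF.2⟩,
    fun F₁ h₁ F₂ h₂ hmod ↦ ⟨h₁.1.inter h₂.1, mem_closure_inter_of_modularPair ?_ h₁.2 h₂.2⟩⟩
  have hF₁ := h₁.1.subset_ground
  have hF₂ := h₂.1.subset_ground
  unfold ModularPair at hmod ⊢
  rwa [hext.rk_eq hF₁, hext.rk_eq hF₂, hext.rk_eq (union_subset hF₁ hF₂),
    hext.rk_eq (inter_subset_left.trans hF₁)] at hmod

/-- If `p ∉ cl'(l ∩ E)`, a nonloop `q ∈ l ∩ E` and the given line `L` through `q` would give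
`cl'(L) = cl'{p, q} ⊆ l`, hence `p ∈ cl'(L) ⊆ cl'(l ∩ E)`. -/
theorem IsExtension.isLine_inter_ground [M'.RankFinite] (hext : IsExtension M' M)
    (hE : M'.E = insert p M.E)
    (hlines : ∀ q ∈ M.E, ∃ L, IsLine M L ∧ q ∈ L ∧ p ∈ M'.closure L)
    {l : Set α} (hl : IsLine M' l) (hpl : p ∈ l) : IsLine M (l ∩ M.E) := by
  set X := l ∩ M.E
  have hpE : p ∈ M'.E := hE ▸ mem_insert p M.E
  have hlX : insert p X = l := by
    rw [insert_inter_distrib, insert_eq_of_mem hpl, ← hE, inter_eq_left.2 hl.1.subset_ground]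
  refine ⟨hext.isFlat_inter_ground hl.1, ?_⟩
  rw [hext.rk_eq inter_subset_right]
  suffices hpX : p ∈ M'.closure X by rw [← rk_insert_of_mem_closure hpX, hlX, hl.2]
  by_contra hpX
  have hX : rk M' X = 1 := by
    have := rk_insert_of_notMem_closure hpE hpX
    rw [hlX, hl.2] at this
    linarith
  obtain ⟨q, hqX, hq⟩ : ∃ q ∈ X, q ∉ M'.closure ∅ := by
    by_contra! hloops
    have := rk_mono (M := M') hloops
    rw [rk_closure, rk_empty] at this
    linarith
  have hqE : q ∈ M'.E := hext.1 hqX.2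
  have hpq : rk M' {p, q} = 2 := by
    rw [rk_insert_of_notMem_closure hpE fun h ↦ hpX (M'.closure_subset_closure
      (singleton_subset_iff.2 hqX) h), ← insert_empty_eq, rk_insert_of_notMem_closure hqE hq,
      rk_empty]
    norm_num
  obtain ⟨L, hL, hqL, hpL⟩ := hlines q hqX.2
  have hLE := hL.1.subset_ground
  have hclL : M'.closure {p, q} = M'.closure L := by
    rw [closure_eq_closure_of_subset_of_rk_le
      (insert_subset hpL (singleton_subset_iff.2 (M'.subset_closure L (hLE.trans hext.1) hqL)))
      (by rw [rk_closure, ← hext.rk_eq hLE, hL.2, hpq]), Matroid.closure_closure]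
  have hLX : L ⊆ X := by
    refine subset_inter ?_ hLE
    calc L ⊆ M'.closure L := M'.subset_closure L (hLE.trans hext.1)
      _ = M'.closure {p, q} := hclL.symm
      _ ⊆ M'.closure l := M'.closure_subset_closure (insert_subset hpl
          (singleton_subset_iff.2 hqX.1))
      _ = l := hl.1.closure
  exact hpX (M'.closure_subset_closure hLX hpL)

end Extension

theorem new_lines_restrict_to_lines_general (M M' : Matroid α) [M.RankFinite] [M'.RankFinite]
    (hhm : Hypermodular M) (hrank : rk M M.E = 4)
    (l₁ l₂ : Set α) (h₁ : IsLine M l₁) (h₂ : IsLine M l₂)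
    (hdisj : l₁ ∩ l₂ = ∅) (hcop : Coplanar M l₁ l₂)
    (p : α) (hext : IsExtension M' M) (hE : M'.E = insert p M.E)
    (hmeet : (M'.closure l₁ ∩ M'.closure l₂).Nonempty) :
    ∀ l, IsLine M' l → p ∈ l → IsLine M (l ∩ M.E) := by
  obtain ⟨x, hx⟩ := hmeet
  rw [hext.eq_of_mem_closure_inter hE h₁.1 h₂.1 hdisj hx] at hx
  have hne : l₁ ≠ l₂ := by
    rintro rfl
    rw [inter_self] at hdisj
    exact h₁.nonempty.ne_empty hdisj
  intro l hl hpl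
  refine hext.isLine_inter_ground hE (fun q hq ↦ ?_) hl hpl
  obtain ⟨L, hL, hqL, hpL⟩ := (hext.isModularCut p).exists_isLine_mem hhm hrank h₁ h₂ hne hcop
    ⟨h₁.1, hx.1⟩ ⟨h₂.1, hx.2⟩ hq
  exact ⟨L, hL, hqL, hpL.2⟩

/-- in a single-element extension intersecting two disjoint coplanar
lines, every line through the new point restricts to a line of `M`. -/
theorem new_lines_restrict_to_lines (M M' : Matroid α) [M.RankFinite] [M'.RankFinite]
    (hhm : Hypermodular M) (hrank : rk M M.E = 4)
    (l₁ l₂ : Set α) (h₁ : IsLine M l₁) (h₂ : IsLine M l₂)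
    (hdisj : l₁ ∩ l₂ = ∅) (hcop : Coplanar M l₁ l₂)
    (p : α) (hp : p ∉ M.E) (hext : IsExtension M' M) (hE : M'.E = insert p M.E)
    (hmeet : (M'.closure l₁ ∩ M'.closure l₂).Nonempty) :
    ∀ l, IsLine M' l → p ∈ l → IsLine M (l ∩ M.E) :=
  new_lines_restrict_to_lines_general M M' hhm hrank l₁ l₂ h₁ h₂ hdisj hcop p hext hE hmeet

end StickyKantor
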